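/- arXiv:2303.09742 — 2 statements merged into one kernel-verified Lean document; each statement's English description precedes it below -/
import Mathlib

section
/- Let G be a connected finite simple graph on n ≥ 3 vertices, let u be a vertex, and let v, w be two neighbors of u that are not adjacent to each other. Let x be a positive unit eigenvector of the distance matrix D(G) corresponding to the distance spectral radius ρ(G). Then x_w + x_u - x_v > 0. -/
/-!
Subtracting row `v` from rows `w` and `u` of `D x = ρ x` gives
`ρ (x_w + x_u - x_v) = ∑_z (d(w,z) + d(u,z) - d(v,z)) x_z`. Since `d(v,z) ≤ 1 + d(u,z)`, every
coefficient with `z ≠ w` is nonnegative, and those at `z = v` and `z = w` are `3` and `-1`, so the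
right-hand side is at least `3 x_v - x_w`. If `x_w + x_u ≤ x_v` this would force
`3 x_v ≤ x_w < x_v`, as `ρ > 0`.
-/

open Matrix Finset

namespace SimpleGraph

variable {V : Type*} {G : SimpleGraph V} {u v w z : V}

lemma dist_eq_two_of_adj_of_adj (huv : G.Adj u v) (huw : G.Adj u w) (hvw : ¬G.Adj v w)
    (hne : v ≠ w) : G.dist v w = 2 := by
  rw [dist, edist_eq_two_iff.mpr ⟨hne, hvw, u, huv.symm, huw.symm⟩]
  rfl

/-- When `u` is not reachable from `z`, all three distances are the junk value `0`. -/
lemma dist_le_dist_add_dist_of_adj_of_adj (huv : G.Adj u v) (huw : G.Adj u w) (hwz : w ≠ z) :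
    G.dist v z ≤ G.dist w z + G.dist u z := by
  by_cases hz : G.Reachable u z
  · have hwz_pos : 0 < G.dist w z := (huw.symm.reachable.trans hz).pos_dist_of_ne hwz
    have htri := huv.symm.reachable.dist_triangle_left z
    rw [dist_eq_one_iff_adj.mpr huv.symm] at htri
    omega
  · rw [dist_eq_zero_of_not_reachable fun h => hz (huv.reachable.trans h)]
    exact Nat.zero_le _

lemma three_mul_sub_le_sum_dist_add_dist_sub_dist [Fintype V] [DecidableEq V] (huv : G.Adj u v)
    (huw : G.Adj u w) (hvw : ¬G.Adj v w) (hne : v ≠ w) {x : V → ℝ} (hx : ∀ z, 0 ≤ x z) :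
    3 * x v - x w ≤ ∑ z, ((G.dist w z : ℝ) + G.dist u z - G.dist v z) * x z := by
  have hcoeff : ∀ z ∈ univ, z ∉ ({v, w} : Finset V) →
      0 ≤ ((G.dist w z : ℝ) + G.dist u z - G.dist v z) * x z := by
    intro z _ hz
    simp only [mem_insert, mem_singleton, not_or] at hz
    have := dist_le_dist_add_dist_of_adj_of_adj huv huw (Ne.symm hz.2)
    have : (G.dist v z : ℝ) ≤ G.dist w z + G.dist u z := by exact_mod_cast this
    exact mul_nonneg (by linarith) (hx z)
  calc 3 * x v - x w
      = ∑ z ∈ {v, w}, ((G.dist w z : ℝ) + G.dist u z - G.dist v z) * x z := by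
        rw [sum_pair hne, dist_comm (u := w), dist_eq_two_of_adj_of_adj huv huw hvw hne,
          dist_eq_one_iff_adj.mpr huv, dist_eq_one_iff_adj.mpr huw, dist_self, dist_self]
        push_cast
        ring
    _ ≤ _ := sum_le_sum_of_subset_of_nonneg (subset_univ _) hcoeff

end SimpleGraph

lemma Matrix.pos_of_mulVec_eq_smul {n : Type*} [Fintype n] {A : Matrix n n ℝ}
    (hA : ∀ i j, 0 ≤ A i j) {i j : n} (hij : 0 < A i j) {x : n → ℝ} (hx : ∀ k, 0 < x k)
    {ρ : ℝ} (h : A *ᵥ x = ρ • x) : 0 < ρ := by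
  have hrow : A i j * x j ≤ ρ * x i := by
    have hi : ∑ k, A i k * x k = ρ * x i := congrFun h i
    exact hi ▸ single_le_sum (f := fun k => A i k * x k) (fun k _ => mul_nonneg (hA i k) (hx k).le)
      (mem_univ j)
  exact pos_of_mul_pos_left (lt_of_lt_of_le (mul_pos hij (hx j)) hrow) (hx i).le

theorem stmt_5_general {V : Type*} [Fintype V] [DecidableEq V]
    (G : SimpleGraph V)
    (u v w : V) (huv : G.Adj u v) (huw : G.Adj u w) (hvw : ¬ G.Adj v w) (hne : v ≠ w)
    (D : Matrix V V ℝ) (hD : D = Matrix.of fun a b => (G.dist a b : ℝ))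
    (ρ : ℝ)
    (x : V → ℝ) (hx : ∀ z, 0 < x z)
    (heig : D *ᵥ x = ρ • x) :
    0 < x w + x u - x v := by
  subst hD
  have hrow (a : V) : ∑ z, (G.dist a z : ℝ) * x z = ρ * x a := congrFun heig a
  have hρ : 0 < ρ := pos_of_mulVec_eq_smul (fun _ _ => Nat.cast_nonneg _) (i := u) (j := v)
    (by simp [G.dist_eq_one_iff_adj.mpr huv]) hx heig
  have key : 3 * x v - x w ≤ ρ * (x w + x u - x v) :=
    calc 3 * x v - x w
        ≤ ∑ z, ((G.dist w z : ℝ) + G.dist u z - G.dist v z) * x z :=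
          G.three_mul_sub_le_sum_dist_add_dist_sub_dist huv huw hvw hne fun z => (hx z).le
      _ = ρ * (x w + x u - x v) := by
          simp only [sub_mul, add_mul, sum_add_distrib, sum_sub_distrib, hrow]
          ring
  by_contra! h
  linarith [mul_nonpos_of_nonneg_of_nonpos hρ.le h, hx u, hx v]

/-- Lemma 4.3 of the paper (graph case): if `v, w` are two non-adjacent neighbors of a vertex
`u` in a connected graph `G` on `n ≥ 3` vertices and `x` is the positive unit Perron
eigenvector of the distance matrix for the distance spectral radius `ρ`, then
`x_w + x_u - x_v > 0`. -/
theorem stmt_5 {V : Type*} [Fintype V] [DecidableEq V]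
    (hV : 3 ≤ Fintype.card V) (G : SimpleGraph V) (hG : G.Connected)
    (u v w : V) (huv : G.Adj u v) (huw : G.Adj u w) (hvw : ¬ G.Adj v w) (hne : v ≠ w)
    (D : Matrix V V ℝ) (hD : D = Matrix.of fun a b => (G.dist a b : ℝ))
    (ρ : ℝ) (hmax : ∀ μ : ℝ, Module.End.HasEigenvalue (Matrix.mulVecLin D) μ → μ ≤ ρ)
    (x : V → ℝ) (hx : ∀ z, 0 < x z) (hunit : ∑ z, x z ^ 2 = 1)
    (heig : D *ᵥ x = ρ • x) :
    0 < x w + x u - x v :=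
  stmt_5_general G u v w huv huw hvw hne D hD ρ x hx heig
end

section
/- Let T be a finite tree and let u₁, v₁, u₂, v₂ be vertices with u₁v₁ and u₂v₂ edges of T such that d_T(u₁,u₂) = d_T(v₁,v₂) + 2. For i = 1,2, let T_i be the component of T − u_iv_i containing u_i, and let x be a positive eigenvector of the distance matrix for ρ(T). Then ρ(T)(x_{u₁} − x_{u₂}) − ρ(T)(x_{v₁} − x_{v₂}) = 2(σ(T₂) − σ(T₁)), where σ(T_i) = Σ_{z ∈ V(T_i)} x_z. -/
open Matrix
open scoped Classical

/-!
Across an edge `uv` of a tree, `d(u, z) - d(v, z)` is `-1` for `z` on the `u`-side of `T - uv`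
and `+1` on the `v`-side. Hence for an eigenvector `D x = ρ x` the rows `u` and `v` give
`ρ (x_u - x_v) = σ(T) - 2 σ(T_u)`, and subtracting the two instances for `u₁v₁` and `u₂v₂`
makes `σ(T)` cancel.
-/

namespace SimpleGraph

variable {V : Type*} {G : SimpleGraph V} {u v z : V}

lemma dist_le_dist_of_not_reachable_deleteEdges (hvz : G.Reachable v z)
    (hsep : ¬(G.deleteEdges {s(u, v)}).Reachable v z) : G.dist u z ≤ G.dist v z := by
  obtain ⟨w, hw⟩ := hvz.exists_walk_length_eq_dist
  have hu : u ∈ w.support :=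
    w.fst_mem_support_of_mem_edges (w.mem_edges_of_not_reachable_deleteEdges hsep)
  calc G.dist u z ≤ (w.dropUntil u hu).length := dist_le _
    _ ≤ w.length := w.length_dropUntil_le_length hu
    _ = G.dist v z := hw

lemma IsTree.dist_eq_dist_add_one_of_reachable_deleteEdges (hT : G.IsTree) (h : G.Adj u v)
    (hz : (G.deleteEdges {s(u, v)}).Reachable u z) : G.dist v z = G.dist u z + 1 := by
  have hsep : ¬(G.deleteEdges {s(u, v)}).Reachable v z := fun hvz =>
    (isAcyclic_iff_forall_adj_isBridge.mp hT.isAcyclic h) (hz.trans hvz.symm)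
  have hle := dist_le_dist_of_not_reachable_deleteEdges (hT.connected v z) hsep
  rcases hT.dist_eq_dist_add_one_of_adj z h with huv | hvu
  · rw [dist_comm, @dist_comm _ _ z] at huv
    omega
  · rwa [dist_comm, @dist_comm _ _ z] at hvu

lemma IsTree.dist_sub_dist_of_adj (hT : G.IsTree) (h : G.Adj u v) (z : V) :
    (G.dist u z : ℝ) - G.dist v z
      = if (G.deleteEdges {s(u, v)}).Reachable u z then -1 else 1 := by
  split_ifs with hz
  · rw [hT.dist_eq_dist_add_one_of_reachable_deleteEdges h hz]
    push_cast
    ring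
  · rw [Sym2.eq_swap] at hz
    have hle := dist_le_dist_of_not_reachable_deleteEdges (hT.connected u z) hz
    rcases hT.dist_eq_dist_add_one_of_adj z h with huv | hvu
    · rw [dist_comm, @dist_comm _ _ z] at huv
      rw [huv]
      push_cast
      ring
    · rw [dist_comm, @dist_comm _ _ z] at hvu
      omega

variable [Fintype V] [DecidableEq V]

lemma IsTree.distMatrix_mulVec_sub_of_adj (hT : G.IsTree) (h : G.Adj u v) (x : V → ℝ) :
    ((of fun a b => (G.dist a b : ℝ)) *ᵥ x) u - ((of fun a b => (G.dist a b : ℝ)) *ᵥ x) v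
      = ∑ z, x z
        - 2 * ∑ z ∈ Finset.univ.filter fun z => (G.deleteEdges {s(u, v)}).Reachable u z, x z := by
  simp only [mulVec, dotProduct, of_apply, ← Finset.sum_sub_distrib, ← sub_mul,
    hT.dist_sub_dist_of_adj h, ite_mul, neg_one_mul, one_mul, Finset.sum_ite,
    Finset.sum_neg_distrib]
  rw [← Finset.sum_filter_add_sum_filter_not Finset.univ
    (fun z => (G.deleteEdges {s(u, v)}).Reachable u z) x]
  ring

end SimpleGraph

theorem stmt_8_general {V : Type*} [Fintype V] [DecidableEq V]
    (T : SimpleGraph V) (hT : T.IsTree) (u₁ v₁ u₂ v₂ : V)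
    (h1 : T.Adj u₁ v₁) (h2 : T.Adj u₂ v₂)
    (D : Matrix V V ℝ) (hD : D = Matrix.of fun a b => (T.dist a b : ℝ))
    (ρ : ℝ)
    (x : V → ℝ) (heig : D *ᵥ x = ρ • x) :
    ρ * (x u₁ - x u₂) - ρ * (x v₁ - x v₂)
      = 2 * ((∑ z ∈ Finset.univ.filter fun z =>
                (T.deleteEdges {s(u₂, v₂)}).Reachable u₂ z, x z)
          - ∑ z ∈ Finset.univ.filter fun z =>
                (T.deleteEdges {s(u₁, v₁)}).Reachable u₁ z, x z) := by
  subst hD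
  have e1 := hT.distMatrix_mulVec_sub_of_adj h1 x
  have e2 := hT.distMatrix_mulVec_sub_of_adj h2 x
  simp only [heig, Pi.smul_apply, smul_eq_mul] at e1 e2
  linarith

/-- Tree case of Lemma 2.1(i): let `u₁v₁` and `u₂v₂` be edges of a finite tree `T` with
`d_T(u₁,u₂) = d_T(v₁,v₂) + 2`, let `T_i` be the component of `T − u_iv_i` containing `u_i`,
and let `x` be a positive eigenvector of the distance matrix for `ρ(T)`. Then
`ρ(T)(x_{u₁} − x_{u₂}) − ρ(T)(x_{v₁} − x_{v₂}) = 2(σ(T₂) − σ(T₁))`. -/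
theorem stmt_8 {V : Type*} [Fintype V] [DecidableEq V]
    (T : SimpleGraph V) (hT : T.IsTree) (u₁ v₁ u₂ v₂ : V)
    (h1 : T.Adj u₁ v₁) (h2 : T.Adj u₂ v₂)
    (hdist : T.dist u₁ u₂ = T.dist v₁ v₂ + 2)
    (D : Matrix V V ℝ) (hD : D = Matrix.of fun a b => (T.dist a b : ℝ))
    (ρ : ℝ) (hmax : ∀ μ : ℝ, Module.End.HasEigenvalue (Matrix.mulVecLin D) μ → μ ≤ ρ)
    (x : V → ℝ) (hx : ∀ z, 0 < x z) (heig : D *ᵥ x = ρ • x) :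
    ρ * (x u₁ - x u₂) - ρ * (x v₁ - x v₂)
      = 2 * ((∑ z ∈ Finset.univ.filter fun z =>
                (T.deleteEdges {s(u₂, v₂)}).Reachable u₂ z, x z)
          - ∑ z ∈ Finset.univ.filter fun z =>
                (T.deleteEdges {s(u₁, v₁)}).Reachable u₁ z, x z) :=
  stmt_8_general T hT u₁ v₁ u₂ v₂ h1 h2 D hD ρ x heig
end
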